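/- arXiv:1002.3134 — 4 statements merged into one kernel-verified Lean document; each statement's English description precedes it below -/
import Mathlib

section
/- Let F be the free group on generators ξ, η. If the reduced word of w ∈ F contains at least one occurrence of the letter η or η⁻¹, then the reduced word of w² contains at least two occurrences of letters from {η, η⁻¹}. -/
/-!
Write the reduced word of `w` as `u ++ c ++ u⁻¹` with `c` cyclically reduced. Then the reduced
word of `w ^ n` (`n ≠ 0`) is `u ++ cⁿ ++ u⁻¹`, so a letter count that ignores exponents is
`2·#u + #c` on `w` and `2·#u + 2·#c` on `w²`: the latter is even and at least the former.
-/

namespace FreeGroup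

open List reduceCyclically

variable {α : Type*}

theorem countP_invRev (p : α → Bool) (L : List (α × Bool)) :
    (invRev L).countP (fun x => p x.1) = L.countP (fun x => p x.1) := by
  simp only [invRev, countP_reverse, countP_map, Function.comp_def]

theorem countP_toWord_pow [DecidableEq α] (p : α → Bool) (x : FreeGroup α) {n : ℕ}
    (hn : n ≠ 0) :
    (x ^ n).toWord.countP (fun y => p y.1) =
      2 * (conjugator x.toWord).countP (fun y => p y.1) +
        n * (reduceCyclically x.toWord).countP (fun y => p y.1) := by
  rw [toWord_pow, reduce_flatten_replicate isReduced_toWord, if_neg hn]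
  simp only [countP_append, countP_invRev, countP_flatten, map_replicate, sum_replicate,
    smul_eq_mul]
  ring

end FreeGroup

/-- In the free group on `ξ = of true`, `η = of false`: if the reduced word of `w` contains at
least one occurrence of `η^{±1}`, then the reduced word of `w²` contains at least two. -/
theorem sq_contains_two_eta (w : FreeGroup Bool)
    (hw : 1 ≤ w.toWord.countP (fun p => p.1 == false)) :
    2 ≤ (w ^ 2).toWord.countP (fun p => p.1 == false) := by
  have h₁ := FreeGroup.countP_toWord_pow (· == false) w one_ne_zero
  have h₂ := FreeGroup.countP_toWord_pow (· == false) w two_ne_zero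
  rw [pow_one] at h₁
  omega
end

section
/- Let F be a free group and let a, b ∈ F with ab ≠ ba. Then the subgroup generated by a and b is a free group of rank 2. -/
/-!
By Nielsen–Schreier, `H = ⟨a, b⟩` is free on some basis `ι`. The surjection from the free group
on two letters onto `H` abelianizes to a surjection `ℤ² → ℤ^(ι)`, so `#ι ≤ 2`; and `#ι ≥ 2`
because a free group on at most one generator is abelian, while `a` and `b` do not commute.
-/

open Function
open scoped Cardinal

universe u v

lemma Abelianization.map_surjective {G H : Type*} [Group G] [Group H] {f : G →* H}
    (hf : Surjective f) : Surjective (Abelianization.map f) := by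
  intro z
  induction z using QuotientGroup.induction_on with | H y => ?_
  obtain ⟨x, rfl⟩ := hf y
  exact ⟨of x, map_of f x⟩

namespace FreeGroup

lemma commute_of_subsingleton {ι : Type*} [Subsingleton ι] (x y : FreeGroup ι) :
    Commute x y := by
  induction x with
  | C1 => exact Commute.one_left y
  | of i =>
    induction y with
    | C1 => exact Commute.one_right _
    | of j => rw [Subsingleton.elim i j]
    | inv_of j h => exact h.inv_right
    | mul u v hu hv => exact hu.mul_right hv
  | inv_of i h => exact h.inv_left
  | mul u v hu hv => exact hu.mul_left hv

lemma lift_mk_le_of_surjective {κ : Type u} {ι : Type v} {f : FreeGroup κ →* FreeGroup ι}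
    (hf : Surjective f) : Cardinal.lift.{u} #ι ≤ Cardinal.lift.{v} #κ := by
  let g : FreeAbelianGroup κ →ₗ[ℤ] FreeAbelianGroup ι :=
    (MonoidHom.toAdditive (Abelianization.map f)).toIntLinearMap
  simpa only [← (FreeAbelianGroup.basis _).mk_eq_rank''] using
    LinearMap.lift_rank_le_of_surjective g (Abelianization.map_surjective hf)

lemma exists_surjective_closure_range {κ G : Type*} [Group G] (v : κ → G) :
    ∃ f : FreeGroup κ →* Subgroup.closure (Set.range v), Surjective f :=
  let e := MulEquiv.subgroupCongr (range_lift_eq_closure (f := v))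
  ⟨e.toMonoidHom.comp (lift v).rangeRestrict,
    e.surjective.comp (lift v).rangeRestrict_surjective⟩

end FreeGroup

namespace FreeGroupBasis

variable {ι : Type u} {κ : Type v} {G : Type*} [Group G]

lemma lift_mk_le_of_surjective (b : FreeGroupBasis ι G) {f : FreeGroup κ →* G}
    (hf : Surjective f) : Cardinal.lift.{v} #ι ≤ Cardinal.lift.{u} #κ :=
  FreeGroup.lift_mk_le_of_surjective (f := b.repr.toMonoidHom.comp f) (b.repr.surjective.comp hf)

lemma nontrivial_of_not_commute (b : FreeGroupBasis ι G) {x y : G} (h : ¬Commute x y) :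
    Nontrivial ι := by
  contrapose! h
  simpa using (FreeGroup.commute_of_subsingleton (b.repr x) (b.repr y)).map b.repr.symm

end FreeGroupBasis

lemma IsFreeGroup.nonempty_basis_fin_two {G : Type u} [Group G] [IsFreeGroup G]
    {f : FreeGroup (Fin 2) →* G} (hf : Surjective f) {x y : G} (hxy : ¬Commute x y) :
    Nonempty (FreeGroupBasis (Fin 2) G) := by
  let b := IsFreeGroup.basis G
  have hle : #(Generators G) ≤ 2 := by simpa using b.lift_mk_le_of_surjective hf
  have hgt : 1 < #(Generators G) :=
    Cardinal.one_lt_iff_nontrivial.2 (b.nontrivial_of_not_commute hxy)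
  have hcard : #(Generators G) = 2 := by
    obtain ⟨n, hn⟩ := Cardinal.lt_aleph0.1 (hle.trans_lt Cardinal.natCast_lt_aleph0)
    rw [hn] at hle hgt ⊢
    norm_cast at hle hgt ⊢
    omega
  obtain ⟨e⟩ := (Cardinal.lift_mk_eq' (α := Generators G) (β := Fin 2)).1 (by simp [hcard])
  exact ⟨b.reindex e⟩

/-- Two non-commuting elements of a free group generate a free group of rank 2. -/
theorem noncommuting_generate_free_rank_two {α : Type*} (a b : FreeGroup α)
    (hab : a * b ≠ b * a) :
    Nonempty (FreeGroupBasis (Fin 2) (Subgroup.closure {a, b} : Subgroup (FreeGroup α))) := by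
  have hmem (i : Fin 2) : ![a, b] i ∈ Subgroup.closure (Set.range ![a, b]) :=
    Subgroup.subset_closure ⟨i, rfl⟩
  obtain ⟨f, hf⟩ := FreeGroup.exists_surjective_closure_range ![a, b]
  -- `IsFreeGroup` of the subgroup is the Nielsen–Schreier instance `subgroupIsFreeOfIsFree`.
  rw [← Matrix.range_cons_cons_empty a b ![]]
  exact IsFreeGroup.nonempty_basis_fin_two hf (x := ⟨a, hmem 0⟩) (y := ⟨b, hmem 1⟩)
    fun h ↦ hab (congrArg Subtype.val h.eq)
end

section
/- Let F be the free group with basis {ξ, η} and let φ be the automorphism of F with φ(ξ) = ξ and φ(η) = ηξ. If the reduced word of w ∈ F contains a subword of the form η ξ^m η for some integer m, then the reduced word of φ(w) also contains a subword of the form η ξ^{m'} η for some integer m'. -/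
/-!
Write `ξ⁺, ξ⁻, η⁺, η⁻` for the letters `ξ, ξ⁻¹, η, η⁻¹`. The reduced word of `φ w` arises from
that of `w` by substituting `η⁺ ↦ η⁺ξ⁺`, `η⁻ ↦ ξ⁻η⁻` and cancelling only the pairs created
inside `η⁺ξ⁻` and `ξ⁺η⁻`: what remains is already reduced. Each such cancellation is triggered by
a letter `ξ⁻` or `η⁻` on the right, so a reduced word `P · η⁺ξ^m · η⁺S` is mapped piece by piece,
to `φ(P) · η⁺ξ^(m+1) · φ(η⁺S)`, and `φ(η⁺S)` still begins with `η⁺`.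
-/

/-- The Whitehead automorphism `ξ ↦ ξ, η ↦ ηξ` (as an endomorphism) of the free group on
`ξ = of true`, `η = of false`. -/
noncomputable def whitehead : FreeGroup Bool →* FreeGroup Bool :=
  FreeGroup.lift (fun b => if b then FreeGroup.of true
    else FreeGroup.of false * FreeGroup.of true)

namespace FreeGroup

variable {α : Type*} [DecidableEq α]

theorem toWord_of_zpow (a : α) (m : ℤ) :
    (of a ^ m).toWord = List.replicate m.natAbs (a, decide (0 ≤ m)) := by
  cases m with
  | ofNat n => simp [toWord_of_pow]
  | negSucc n => simp [toWord_inv, toWord_of_pow, invRev]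

theorem toWord_of_mul_zpow {a b : α} (hab : a ≠ b) (m : ℤ) :
    (of a * of b ^ m).toWord = (a, true) :: (of b ^ m).toWord := by
  rw [toWord_mul, toWord_of, List.singleton_append]
  refine IsReduced.reduce_eq ?_
  rw [toWord_of_zpow, IsReduced, List.isChain_cons]
  simp [List.isChain_replicate_of_rel, List.head?_replicate, hab]

theorem toWord_of_mul_zpow_mul_of {a b : α} (hab : a ≠ b) (m : ℤ) :
    (of a * of b ^ m * of a).toWord = (of a * of b ^ m).toWord ++ [(a, true)] := by
  rw [toWord_mul, toWord_of]
  refine IsReduced.reduce_eq ?_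
  rw [toWord_of_mul_zpow hab, toWord_of_zpow, List.cons_append, IsReduced, List.isChain_cons,
    List.isChain_append]
  cases m.natAbs <;>
    simp [List.isChain_replicate_of_rel, List.head?_replicate, List.getLast?_replicate, hab,
      Ne.symm hab]

end FreeGroup

open FreeGroup

local notation "ξ⁺" => ((true, true) : Bool × Bool)
local notation "ξ⁻" => ((true, false) : Bool × Bool)
local notation "η⁺" => ((false, true) : Bool × Bool)
local notation "η⁻" => ((false, false) : Bool × Bool)

def whiteheadLetter : Bool × Bool → List (Bool × Bool)
  | (true, b) => [(true, b)]
  | η⁺ => [η⁺, ξ⁺]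
  | η⁻ => [ξ⁻, η⁻]

/-- On a reduced word `L` this is `(whitehead (mk L)).toWord`: the letterwise substitution, with
the cancellations `η⁺ξ⁺·ξ⁻ = η⁺` and `ξ⁺·ξ⁻η⁻ = η⁻` carried out. -/
def whiteheadWord : List (Bool × Bool) → List (Bool × Bool)
  | η⁺ :: ξ⁻ :: l => η⁺ :: whiteheadWord l
  | ξ⁺ :: η⁻ :: l => η⁻ :: whiteheadWord l
  | a :: l => whiteheadLetter a ++ whiteheadWord l
  | [] => []

theorem whitehead_mk_singleton (a : Bool × Bool) :
    whitehead (mk [a]) = mk (whiteheadLetter a) := by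
  rcases a with ⟨_ | _, _ | _⟩ <;> rfl

theorem whitehead_mk (L : List (Bool × Bool)) :
    whitehead (mk L) = mk (L.flatMap whiteheadLetter) := by
  induction L with
  | nil => rfl
  | cons a L ih =>
    rw [List.flatMap_cons, ← mul_mk, ← ih, ← whitehead_mk_singleton, ← _root_.map_mul, mul_mk,
      List.singleton_append]

theorem mk_whiteheadWord (L : List (Bool × Bool)) :
    mk (whiteheadWord L) = mk (L.flatMap whiteheadLetter) := by
  induction L using whiteheadWord.induct with
  | case1 l ih =>
    calc mk (η⁺ :: whiteheadWord l) = mk [η⁺] * mk (whiteheadWord l) := rfl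
      _ = mk ([η⁺] ++ ξ⁺ :: ξ⁻ :: l.flatMap whiteheadLetter) := by
        rw [ih, mul_mk]; exact (Quot.sound Red.Step.not).symm
  | case2 l ih =>
    calc mk (η⁻ :: whiteheadWord l) = mk [η⁻] * mk (whiteheadWord l) := rfl
      _ = mk (ξ⁺ :: ξ⁻ :: η⁻ :: l.flatMap whiteheadLetter) := by
        rw [ih, mul_mk]; exact (Quot.sound (Red.Step.not (L₁ := []))).symm
  | case3 a l h₁ h₂ ih =>
    rw [whiteheadWord.eq_3 a l h₁ h₂, List.flatMap_cons, ← mul_mk, ih, mul_mk]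
  | case4 => rfl

theorem head?_whiteheadWord_cons (a : Bool × Bool) (l : List (Bool × Bool)) :
    (whiteheadWord (a :: l)).head? = (whiteheadLetter a).head? ∨
      a = ξ⁺ ∧ (whiteheadWord (a :: l)).head? = some η⁻ := by
  rcases a with ⟨_ | _, _ | _⟩ <;> rcases l with _ | ⟨⟨_ | _, _ | _⟩, l⟩ <;>
    simp [whiteheadWord, whiteheadLetter]

theorem isReduced_append_whiteheadWord_cons {P : List (Bool × Bool)} {b : Bool × Bool}
    {l : List (Bool × Bool)} (hP : IsReduced P) (hl : IsReduced (whiteheadWord (b :: l)))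
    (hPb : ∀ c ∈ P.getLast?, (∀ h ∈ (whiteheadLetter b).head?, c.1 = h.1 → c.2 = h.2) ∧
      (b = ξ⁺ → c.1 = η⁻.1 → c.2 = η⁻.2)) :
    IsReduced (P ++ whiteheadWord (b :: l)) := by
  refine List.IsChain.append hP hl fun c hc h hh => ?_
  rcases head?_whiteheadWord_cons b l with hb | ⟨rfl, hb⟩
  · exact (hPb c hc).1 h (hb ▸ hh)
  · rw [hb, Option.mem_some_iff] at hh
    exact hh ▸ (hPb c hc).2 rfl

theorem isReduced_whiteheadWord {L : List (Bool × Bool)} (hL : IsReduced L) :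
    IsReduced (whiteheadWord L) := by
  induction L using whiteheadWord.induct with
  | case1 l ih | case2 l ih =>
    rcases l with _ | ⟨b, l⟩
    · simp [whiteheadWord]
    obtain ⟨hb, hl⟩ := isReduced_cons_cons.1 (isReduced_cons_cons.1 hL).2
    rw [whiteheadWord, ← List.singleton_append]
    refine isReduced_append_whiteheadWord_cons .singleton (ih hl) ?_
    revert hb
    rcases b with ⟨_ | _, _ | _⟩ <;> decide
  | case3 a l h₁ h₂ ih =>
    rw [whiteheadWord.eq_3 a l h₁ h₂]
    have ha : IsReduced (whiteheadLetter a) := by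
      rcases a with ⟨_ | _, _ | _⟩ <;> simp [whiteheadLetter]
    rcases l with _ | ⟨b, l⟩
    · simpa [whiteheadWord] using ha
    obtain ⟨hab, hl⟩ := isReduced_cons_cons.1 hL
    refine isReduced_append_whiteheadWord_cons ha (ih hl) ?_
    have h₁' : ¬(a = η⁺ ∧ b = ξ⁻) := fun ⟨ha, hb⟩ => h₁ l ha (hb ▸ rfl)
    have h₂' : ¬(a = ξ⁺ ∧ b = η⁻) := fun ⟨ha, hb⟩ => h₂ l ha (hb ▸ rfl)
    revert hab h₁' h₂'
    rcases a with ⟨_ | _, _ | _⟩ <;> rcases b with ⟨_ | _, _ | _⟩ <;> decide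
  | case4 => exact .nil

theorem toWord_whitehead (w : FreeGroup Bool) :
    (whitehead w).toWord = whiteheadWord w.toWord := by
  conv_lhs => rw [← mk_toWord (x := w), whitehead_mk, ← mk_whiteheadWord, toWord_mk]
  exact (isReduced_whiteheadWord isReduced_toWord).reduce_eq

theorem whiteheadWord_append (L : List (Bool × Bool)) {l : List (Bool × Bool)}
    (hl : ∀ a ∈ l.head?, a.2 = true) :
    whiteheadWord (L ++ l) = whiteheadWord L ++ whiteheadWord l := by
  induction L using whiteheadWord.induct with
  | case1 L ih | case2 L ih => simp [whiteheadWord, ih]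
  | case3 a L h₁ h₂ ih =>
    have hL : ∀ c l₁, c.2 = false → L ++ l = c :: l₁ → ∃ l₂, L = c :: l₂ := by
      intro c l₁ hc he
      rcases L with _ | ⟨d, L⟩
      · rw [List.nil_append] at he
        exact absurd (hl c (by simp [he])) (by simp [hc])
      · exact ⟨L, by simp_all⟩
    rw [List.cons_append, whiteheadWord.eq_3 a (L ++ l), ih, whiteheadWord.eq_3 a L h₁ h₂,
      List.append_assoc]
    · rintro l₁ rfl he
      obtain ⟨l₂, rfl⟩ := hL _ _ rfl he
      exact h₁ l₂ rfl rfl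
    · rintro l₁ rfl he
      obtain ⟨l₂, rfl⟩ := hL _ _ rfl he
      exact h₂ l₂ rfl rfl
  | case4 => rfl

theorem whitehead_of_mul_zpow (m : ℤ) :
    whitehead (of false * of true ^ m) = of false * of true ^ (m + 1) := by
  simp only [whitehead, _root_.map_mul, map_zpow, lift_apply_of, Bool.false_eq_true, if_false,
    if_true]
  rw [mul_assoc, mul_self_zpow]

/-- If the reduced word of `w` contains a subword `η ξ^m η`, then the reduced word of the image
of `w` under the Whitehead automorphism `ξ ↦ ξ, η ↦ ηξ` contains a subword `η ξ^{m'} η`. -/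
theorem whitehead_preserves_eta_xi_eta (w : FreeGroup Bool)
    (hw : ∃ m : ℤ,
      (FreeGroup.of false * (FreeGroup.of true : FreeGroup Bool) ^ m *
        FreeGroup.of false).toWord <:+: w.toWord) :
    ∃ m' : ℤ,
      (FreeGroup.of false * (FreeGroup.of true : FreeGroup Bool) ^ m' *
        FreeGroup.of false).toWord <:+: (whitehead w).toWord := by
  obtain ⟨m, P, S, hw⟩ := hw
  rw [toWord_of_mul_zpow_mul_of Bool.false_ne_true, List.append_assoc, List.append_assoc,
    List.singleton_append] at hw
  obtain ⟨t, ht⟩ : ∃ t, whiteheadWord (η⁺ :: S) = η⁺ :: t := by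
    rw [← List.head?_eq_some_iff]
    simpa [whiteheadLetter] using head?_whiteheadWord_cons η⁺ S
  refine ⟨m + 1, whiteheadWord P, t, ?_⟩
  rw [toWord_of_mul_zpow_mul_of Bool.false_ne_true, toWord_whitehead, ← hw,
    whiteheadWord_append P (by simp [toWord_of_mul_zpow Bool.false_ne_true]),
    whiteheadWord_append _ (by simp), ← toWord_whitehead, whitehead_of_mul_zpow, ht]
  simp
end

section
/- Let F be the free group with basis {ξ, η}, let ℓ ≥ 1, and let w ∈ F have reduced form ξ^N w' where N > 4ℓ, the reduced word w' has length at most 2ℓ, and w' contains at least two letters from {η, η⁻¹}. If w = u v^n u⁻¹ with n ≥ 2, u, v ∈ F, v cyclically reduced, and the right-hand side reduced (|w| = 2|u| + n|v|), then vu is a power of ξ. -/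
private lemma toWord_mul_of_norm_add {x y : FreeGroup Bool}
    (h : (x * y).norm = x.norm + y.norm) :
    (x * y).toWord = x.toWord ++ y.toWord :=
  (FreeGroup.toWord_mul_sublist x y).eq_of_length
    (by simpa [FreeGroup.norm, List.length_append] using h)

private lemma myNormPowLe (v : FreeGroup Bool) (n : ℕ) : (v ^ n).norm ≤ n * v.norm := by
  induction n with
  | zero => simp
  | succ k ih =>
    calc (v ^ (k+1)).norm = (v ^ k * v).norm := by rw [pow_succ]
      _ ≤ (v ^ k).norm + v.norm := FreeGroup.norm_mul_le _ _
      _ ≤ k * v.norm + v.norm := by omega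
      _ = (k + 1) * v.norm := by ring

/-- Let `w = ξ^N w'` (reduced, no cancellation) in the free group on `ξ = of true`,
`η = of false`, where `N > 4ℓ`, `|w'| ≤ 2ℓ` and `w'` contains at least two letters `η^{±1}`.
If `w = u v^n u⁻¹` with `n ≥ 2`, `v` cyclically reduced and the expression reduced
(`|w| = 2|u| + n|v|`), then `vu` is a power of `ξ`. -/
theorem power_form_implies_vu_power_of_xi
    (ℓ N : ℕ) (hl : 1 ≤ ℓ) (hN : 4 * ℓ < N)
    (w w' u v : FreeGroup Bool) (n : ℕ) (hn : 2 ≤ n)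
    (hw : w = (FreeGroup.of true) ^ N * w')
    (hred : w.toWord = ((FreeGroup.of true : FreeGroup Bool) ^ N).toWord ++ w'.toWord)
    (hw'len : w'.norm ≤ 2 * ℓ)
    (hw'eta : 2 ≤ w'.toWord.countP (fun p => p.1 == false))
    (hconj : w = u * v ^ n * u⁻¹)
    (hvcyc : ∀ c : FreeGroup Bool, IsConj v c → v.norm ≤ c.norm)
    (hnocancel : w.norm = 2 * u.norm + n * v.norm) :
    ∃ k : ℤ, v * u = (FreeGroup.of true) ^ k := by
  set a := u.norm with ha
  set b := v.norm with hb
  -- length of w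
  have hwlen : w.norm = N + w'.norm := by
    rw [FreeGroup.norm, hred, List.length_append, FreeGroup.toWord_of_pow,
      List.length_replicate]; rfl
  -- v ≠ 1
  have hbpos : 1 ≤ b := by
    by_contra h
    have hv1 : v = 1 := by
      rw [← FreeGroup.norm_eq_zero]; omega
    rw [hv1, one_pow, mul_one, mul_inv_cancel] at hconj
    have : w.norm = 0 := by rw [hconj]; simp
    omega
  -- forced equalities of norms
  have h1 : (u * v ^ n).norm ≤ a + (v ^ n).norm := FreeGroup.norm_mul_le _ _
  have h2 : w.norm ≤ (u * v ^ n).norm + a := by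
    have := FreeGroup.norm_mul_le (u * v ^ n) u⁻¹
    rw [← hconj] at this
    simpa [FreeGroup.norm_inv_eq] using this
  have h3 : (v ^ n).norm ≤ n * b := myNormPowLe v n
  have hvn : (v ^ n).norm = n * b := by omega
  have huvn : (u * v ^ n).norm = a + n * b := by omega
  -- w.toWord splits
  have e1 : w.toWord = (u * v ^ n).toWord ++ u⁻¹.toWord := by
    rw [hconj]
    exact toWord_mul_of_norm_add (by rw [← hconj, hnocancel, huvn, FreeGroup.norm_inv_eq]; omega)
  have e2 : (u * v ^ n).toWord = u.toWord ++ (v ^ n).toWord := by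
    exact toWord_mul_of_norm_add (by rw [huvn, hvn])
  -- first copy of v splits off
  have hvsplit : v ^ n = v * v ^ (n - 1) := by
    rw [← pow_succ']
    congr 1
    omega
  have h4 : (v ^ (n-1)).norm ≤ (n-1) * b := myNormPowLe v (n-1)
  have h5 : (v * v ^ (n-1)).norm = b + (v ^ (n-1)).norm := by
    have hle := FreeGroup.norm_mul_le v (v ^ (n-1))
    have : (v * v ^ (n-1)).norm = n * b := by rw [← hvsplit, hvn]
    have hnb : n * b = b + (n-1) * b := by
      have hn1 : n - 1 + 1 = n := by omega
      calc n * b = (n - 1 + 1) * b := by rw [hn1]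
        _ = b + (n-1) * b := by ring
    omega
  have e3 : (v ^ n).toWord = v.toWord ++ (v ^ (n-1)).toWord := by
    rw [hvsplit]; exact toWord_mul_of_norm_add h5
  -- a + b ≤ N
  have habN : a + b ≤ N := by
    have : n * b ≥ 2 * b := Nat.mul_le_mul_right b hn
    omega
  -- compare the two decompositions
  have key : u.toWord ++ v.toWord ++ ((v ^ (n-1)).toWord ++ u⁻¹.toWord)
      = (List.replicate (a + b) (true, true) ++ List.replicate (N - (a+b)) (true, true))
        ++ w'.toWord := by
    rw [← List.replicate_add]
    have : a + b + (N - (a + b)) = N := by omega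
    rw [this, ← FreeGroup.toWord_of_pow true N, ← hred, e1, e2, e3]
    simp [List.append_assoc]
  have hua : u.toWord.length = a := ha.symm
  have hvb : v.toWord.length = b := hb.symm
  have hlen : (u.toWord ++ v.toWord).length = a + b := by
    rw [List.length_append, hua, hvb]
  have huv : u.toWord ++ v.toWord = List.replicate (a + b) (true, true) := by
    have h := congrArg (List.take (a + b)) key
    rwa [List.append_assoc (List.replicate (a + b) (true, true)),
      List.take_left' hlen,
      List.take_left' (by simp)] at h
  have hulen : u.toWord.length = (List.replicate a ((true : Bool), true)).length := by
    simp [hua]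
  have huw : u.toWord = List.replicate a (true, true) ∧
      v.toWord = List.replicate b (true, true) := by
    have : u.toWord ++ v.toWord = List.replicate a (true, true) ++
        List.replicate b (true, true) := by
      rw [huv, ← List.replicate_add]
    exact ⟨(List.append_inj this hulen).1, (List.append_inj this hulen).2⟩
  have hu : u = (FreeGroup.of true) ^ a := by
    rw [← FreeGroup.mk_toWord (x := u), huw.1, ← FreeGroup.toWord_of_pow true a,
      FreeGroup.mk_toWord]
  have hv : v = (FreeGroup.of true) ^ b := by
    rw [← FreeGroup.mk_toWord (x := v), huw.2, ← FreeGroup.toWord_of_pow true b,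
      FreeGroup.mk_toWord]
  refine ⟨(b + a : ℕ), ?_⟩
  rw [hu, hv, zpow_natCast, ← pow_add]
end
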